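/- Let d ≥ 1 and m ≥ 1. Let q₁, …, q_{d+1} be affinely independent points of ℝ^d, let p₁, …, p_m be points of ℝ^d, and let c_{i,j} ∈ ℝ (for 1 ≤ i ≤ m, 1 ≤ j ≤ d+1) be coefficients such that Σ_{j=1}^{d+1} c_{i,j} = 1 and p_i = Σ_{j=1}^{d+1} c_{i,j}·q_j for every i. Let S be a finite subset of ℝ^d. Then there exists an affine map f : ℝ^d → ℝ^d with f(q_j) ∈ S for all 1 ≤ j ≤ d+1 and f(p_i) ∈ S for all 1 ≤ i ≤ m, if and only if there exist points b₁, …, b_{d+1} ∈ S and a₁, …, a_m ∈ S such that a_i = Σ_{j=1}^{d+1} c_{i,j}·b_j for every 1 ≤ i ≤ m. -/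
import Mathlib

/-- The affine map sending an affine basis to a prescribed family of points in a module. -/
noncomputable def affineBasisMap {ι k V P W : Type*} [Fintype ι] [CommRing k] [AddCommGroup V]
    [Module k V] [AddTorsor V P] [AddCommGroup W] [Module k W]
    (B : AffineBasis ι k P) (b : ι → W) : P →ᵃ[k] W where
  toFun x := ∑ i, B.coord i x • b i
  linear := ∑ i, ((B.coord i).linear).smulRight (b i)
  map_vadd' x v := by
    simp only [LinearMap.coe_sum, Finset.sum_apply, LinearMap.smulRight_apply]
    rw [vadd_eq_add, ← Finset.sum_add_distrib]
    congr 1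
    ext i
    rw [AffineMap.map_vadd, vadd_eq_add, add_smul, add_comm]

theorem affineBasisMap_apply_basis {ι k V P W : Type*} [Fintype ι] [DecidableEq ι] [CommRing k] [AddCommGroup V]
    [Module k V] [AddTorsor V P] [AddCommGroup W] [Module k W]
    (B : AffineBasis ι k P) (b : ι → W) (j : ι) : affineBasisMap B b (B j) = b j := by
  show ∑ i, B.coord i (B j) • b i = b j
  rw [Finset.sum_eq_single j]
  · simp
  · intro i _ hij; rw [B.coord_apply_ne hij, zero_smul]
  · simp

/-- Set-level correctness of the reduction of AFFINE MATCHING to kSUM: given affinely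
independent points `q₁, …, q_{d+1}` of `ℝ^d` and further points `p₁, …, p_m` with
barycentric coordinates `c_{i,j}` (so `∑ⱼ c_{i,j} = 1` and `pᵢ = ∑ⱼ c_{i,j} • qⱼ`),
a finite set `S ⊆ ℝ^d` contains the image of the pattern under some affine map
`f : ℝ^d → ℝ^d` iff it contains points `b₁, …, b_{d+1}, a₁, …, a_m` satisfying the
linear relations `aᵢ = ∑ⱼ c_{i,j} • bⱼ`. -/
theorem affine_matching_iff (d m : ℕ) (hd : 1 ≤ d) (hm : 1 ≤ m)
    (q : Fin (d + 1) → EuclideanSpace ℝ (Fin d)) (hq : AffineIndependent ℝ q)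
    (p : Fin m → EuclideanSpace ℝ (Fin d)) (c : Fin m → Fin (d + 1) → ℝ)
    (hc1 : ∀ i, ∑ j, c i j = 1)
    (hcp : ∀ i, p i = ∑ j, c i j • q j)
    (S : Finset (EuclideanSpace ℝ (Fin d))) :
    (∃ f : EuclideanSpace ℝ (Fin d) →ᵃ[ℝ] EuclideanSpace ℝ (Fin d),
        (∀ j, f (q j) ∈ S) ∧ (∀ i, f (p i) ∈ S)) ↔
    (∃ b : Fin (d + 1) → EuclideanSpace ℝ (Fin d),
      ∃ a : Fin m → EuclideanSpace ℝ (Fin d),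
        (∀ j, b j ∈ S) ∧ (∀ i, a i ∈ S) ∧ ∀ i, a i = ∑ j, c i j • b j) := by
  have hqcomb : ∀ i, Finset.univ.affineCombination ℝ q (c i) = p i := fun i => by
    rw [Finset.univ.affineCombination_eq_linear_combination q (c i) (hc1 i), hcp i]
  constructor
  · rintro ⟨f, hfq, hfp⟩
    refine ⟨fun j => f (q j), fun i => f (p i), hfq, hfp, fun i => ?_⟩
    show f (p i) = ∑ j, c i j • f (q j)
    rw [← hqcomb i, Finset.univ.map_affineCombination q (c i) (hc1 i),
      Finset.univ.affineCombination_eq_linear_combination (f ∘ q) (c i) (hc1 i)]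
    simp [Function.comp]
  · rintro ⟨b, a, hb, ha, hab⟩
    have htot : affineSpan ℝ (Set.range q) = ⊤ := by
      rw [hq.affineSpan_eq_top_iff_card_eq_finrank_add_one]
      simp [finrank_euclideanSpace_fin]
    let B : AffineBasis (Fin (d + 1)) ℝ (EuclideanSpace ℝ (Fin d)) := ⟨q, hq, htot⟩
    have hBq : ∀ j, B j = q j := fun j => rfl
    refine ⟨affineBasisMap B b, fun j => ?_, fun i => ?_⟩
    · rw [← hBq j, affineBasisMap_apply_basis]; exact hb j
    · have : affineBasisMap B b (p i) = ∑ j, c i j • b j := by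
        show ∑ j, B.coord j (p i) • b j = ∑ j, c i j • b j
        refine Finset.sum_congr rfl fun j _ => ?_
        have : B.coord j (p i) = c i j := by
          rw [← hqcomb i]
          exact B.coord_apply_combination_of_mem (Finset.mem_univ j) (hc1 i)
        rw [this]
      rw [this, ← hab i]; exact ha i
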